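/- Let Θ : Ω → Ψ be measurable and {P_θ}_{θ∈Ψ} a disintegration of P over P_Θ consistent with Θ. Let I be countable, T countably generated, and {X_i}_{i∈I} measurable maps Ω → Y. Then {X_i}_{i∈I} is P-conditionally independent given Θ (i.e., for distinct i_1,…,i_n and E_j ∈ σ(X_{i_j}), P(E_1 ∩ … ∩ E_n | σ(Θ)) = ∏_j P(E_j | σ(Θ)) a.s.) if and only if for P_Θ-almost all θ∈Ψ the family {X_i}_{i∈I} is independent under P_θ. -/

import Mathlib

/-!
A consistent disintegration computes conditional probabilities given `Θ`: integrating
`θ ↦ P_θ(D)` over `B` gives `P(D ∩ Θ⁻¹ B)`, because `P_θ` lives on `Θ⁻¹{θ}`, so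
`P(D | σ(Θ))(ω) = P_{Θ ω}(D)` almost surely. Hence each product identity defining conditional
independence holds `P`-a.s. iff `P_θ(E₁ ∩ … ∩ Eₙ) = ∏ P_θ(E_j)` for `P_Θ`-a.e. `θ`: conditional
independence is independence with respect to the kernel `θ ↦ P_θ`. Pulling "for a.e. `θ`" in
front of all events is where countability enters: independence under each `P_θ` may be tested on
the countable π-systems generated by preimages of a countable generator of `T`, over the countably
many finite sets of indices.
-/

open MeasureTheory Set

/-- A family `{X_i}` of measurable maps is `P`-conditionally independent over the
σ-algebra `F`: for finitely many distinct indices `i₁, …, iₙ` and events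
`E_j ∈ σ(X_{i_j})`, `P(E₁ ∩ … ∩ Eₙ | F) = ∏ⱼ P(E_j | F)` holds `P|F`-a.s. -/
def CondIndepFam {Ω Y I : Type*} [MeasurableSpace Ω] (mY : MeasurableSpace Y)
    (P : Measure Ω) (F : MeasurableSpace Ω) (X : I → Ω → Y) : Prop :=
  ∀ (n : ℕ) (idx : Fin n → I), Function.Injective idx →
    ∀ E : Fin n → Set Ω,
      (∀ j, MeasurableSet[MeasurableSpace.comap (X (idx j)) mY] (E j)) →
      P[Set.indicator (⋂ j, E j) (fun _ => (1 : ℝ)) | F]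
        =ᵐ[P] fun ω => ∏ j, (P[Set.indicator (E j) (fun _ => (1 : ℝ)) | F]) ω

open ProbabilityTheory MeasurableSpace

lemma countable_generatePiSystem {α : Type*} {S : Set (Set α)} (hS : S.Countable) :
    (generatePiSystem S).Countable := by
  classical
  have := hS.to_subtype
  refine (countable_range fun T : Finset S => ⋂ x ∈ T, (x : Set α)).mono fun t ht => ?_
  induction ht with
  | base h => exact ⟨{⟨_, h⟩}, by simp⟩
  | inter _ _ _ ihs iht =>
    obtain ⟨T₁, rfl⟩ := ihs
    obtain ⟨T₂, rfl⟩ := iht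
    exact ⟨T₁ ∪ T₂, by simp only [Finset.mem_union, iInter_or, iInter_inter_distrib]⟩

namespace ProbabilityTheory.Kernel

variable {α Ω ι : Type*} {_mα : MeasurableSpace α} {_mΩ : MeasurableSpace Ω} {κ : Kernel α Ω}
  {μ : Measure α}

lemma iIndep_iff_forall_injective_fin {m : ι → MeasurableSpace Ω} :
    iIndep m κ μ ↔ ∀ (n : ℕ) (idx : Fin n → ι), Function.Injective idx →
      ∀ E : Fin n → Set Ω, (∀ j, MeasurableSet[m (idx j)] (E j)) →
        ∀ᵐ a ∂μ, κ a (⋂ j, E j) = ∏ j, κ a (E j) := by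
  refine ⟨fun h n idx hidx E hE => (h.precomp hidx).meas_iInter hE, fun h s f hf => ?_⟩
  let e := s.equivFin.symm
  filter_upwards [h _ (fun j => (e j : ι)) (Subtype.val_injective.comp e.injective)
    (fun j => f (e j)) (fun j => hf _ (e j).2)] with a ha
  rw [← Finset.prod_coe_sort, ← e.prod_comp, ← ha, e.surjective.iInter_comp (fun i : s => f i),
    iInter_subtype (· ∈ s) fun i => f i]

lemma iIndepSets.ae_iIndepSets [Countable ι] {π : ι → Set (Set Ω)} (hπ : ∀ i, (π i).Countable)
    (h : iIndepSets π κ μ) : ∀ᵐ a ∂μ, ProbabilityTheory.iIndepSets π (κ a) := by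
  have := fun i => (hπ i).to_subtype
  have hsub (s : Finset ι) (f : ι → Set Ω) : ⋂ i ∈ s, f i = ⋂ i : s, f i :=
    (iInter_subtype (· ∈ s) fun i => f i).symm
  have hall : ∀ᵐ a ∂μ, ∀ (s : Finset ι) (g : ∀ i : s, π i),
      κ a (⋂ i, (g i : Set Ω)) = ∏ i, κ a (g i) := by
    refine ae_all_iff.2 fun s => ae_all_iff.2 fun g => ?_
    classical
    filter_upwards [h s (f := fun i => if hi : i ∈ s then g ⟨i, hi⟩ else univ)
      (fun i hi => by simp only [hi, dite_true, Subtype.coe_prop])] with a ha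
    rw [← Finset.prod_coe_sort, hsub] at ha
    simpa only [Finset.coe_mem, dite_true] using ha
  filter_upwards [hall] with a ha
  refine (iIndepSets_iff _ _).2 fun s f hf => ?_
  rw [← Finset.prod_coe_sort, hsub]
  exact ha s fun i => ⟨f i, hf i i.2⟩

lemma iIndepFun_iff_ae_iIndepFun [Countable ι] {β : ι → Type*} {mβ : ∀ i, MeasurableSpace (β i)}
    [∀ i, CountablyGenerated (β i)] {f : ∀ i, Ω → β i} (hf : ∀ i, Measurable (f i)) :
    iIndepFun f κ μ ↔ ∀ᵐ a ∂μ, ProbabilityTheory.iIndepFun f (κ a) := by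
  refine ⟨fun h => ?_, fun h s g hg => ?_⟩
  · let π i : Set (Set Ω) := (f i ⁻¹' ·) '' generatePiSystem (countableGeneratingSet (β i))
    have hgen i : MeasurableSpace.comap (f i) (mβ i) = generateFrom (π i) := by
      conv_lhs => rw [← generateFrom_countableGeneratingSet (α := β i),
        ← generateFrom_generatePiSystem_eq]
      exact comap_generateFrom
    have hπ : iIndepSets π κ μ := fun s g hg =>
      h s fun i hi => by
        show MeasurableSet[MeasurableSpace.comap (f i) (mβ i)] (g i)
        rw [hgen i]
        exact measurableSet_generateFrom (hg i hi)
    filter_upwards [hπ.ae_iIndepSets fun i =>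
      (countable_generatePiSystem (countable_countableGeneratingSet (α := β i))).image _] with a ha
    exact (iIndepFun_iff_iIndep _ _ _).2 <| ha.iIndep (fun i => (hf i).comap_le) π
      (fun i => (isPiSystem_generatePiSystem _).comap (f i)) hgen
  · filter_upwards [h] with a ha
    exact ha.iIndep.meas_biInter hg

end ProbabilityTheory.Kernel

section Disintegration

variable {Ω Ψ : Type*} {_mΩ : MeasurableSpace Ω} {mΨ : MeasurableSpace Ψ}

structure IsConsistentDisintegration (P : Measure Ω) (Θ : Ω → Ψ) (κ : Kernel Ψ Ω) : Prop where
  lintegral_eq : ∀ D, MeasurableSet D → ∫⁻ θ, κ θ D ∂P.map Θ = P D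
  ae_preimage_eq_one : ∀ B, MeasurableSet B → ∀ᵐ θ ∂(P.map Θ).restrict B, κ θ (Θ ⁻¹' B) = 1

namespace IsConsistentDisintegration

variable {P : Measure Ω} {Θ : Ω → Ψ} {κ : Kernel Ψ Ω} [IsMarkovKernel κ]

lemma measure_inter_preimage_ae_eq_indicator (hκ : IsConsistentDisintegration P Θ κ) (hΘ : Measurable Θ)
    (D : Set Ω) {B : Set Ψ} (hB : MeasurableSet B) :
    (fun θ => κ θ (D ∩ Θ ⁻¹' B)) =ᵐ[P.map Θ] B.indicator fun θ => κ θ D := by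
  filter_upwards [(ae_restrict_iff' hB).1 (hκ.ae_preimage_eq_one B hB),
    (ae_restrict_iff' hB.compl).1 (hκ.ae_preimage_eq_one Bᶜ hB.compl)] with θ hθB hθBc
  by_cases hθ : θ ∈ B
  · rw [indicator_of_mem hθ]
    exact measure_inter_conull ((prob_compl_eq_zero_iff (hΘ hB)).2 (hθB hθ))
  · rw [indicator_of_notMem hθ]
    exact measure_mono_null inter_subset_right ((prob_compl_eq_one_iff (hΘ hB)).1 (hθBc hθ))

lemma setLIntegral_eq (hκ : IsConsistentDisintegration P Θ κ) (hΘ : Measurable Θ)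
    {D : Set Ω} (hD : MeasurableSet D) {B : Set Ψ} (hB : MeasurableSet B) :
    ∫⁻ θ in B, κ θ D ∂P.map Θ = P (D ∩ Θ ⁻¹' B) := by
  rw [← lintegral_indicator hB, ← hκ.lintegral_eq _ (hD.inter (hΘ hB))]
  exact lintegral_congr_ae (hκ.measure_inter_preimage_ae_eq_indicator hΘ D hB).symm

lemma condExp_indicator_ae_eq [IsFiniteMeasure P] (hκ : IsConsistentDisintegration P Θ κ)
    (hΘ : Measurable Θ) {D : Set Ω} (hD : MeasurableSet D) :
    P[D.indicator (fun _ => (1 : ℝ)) | MeasurableSpace.comap Θ mΨ]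
      =ᵐ[P] fun ω => (κ (Θ ω)).real D := by
  have hκD := κ.measurable_coe hD
  have hmeas : Measurable[MeasurableSpace.comap Θ mΨ] fun ω => (κ (Θ ω)).real D :=
    hκD.ennreal_toReal.comp (comap_measurable Θ)
  have hint : Integrable (fun ω => (κ (Θ ω)).real D) P := by
    refine integrable_toReal_of_lintegral_ne_top (hκD.comp hΘ).aemeasurable ?_
    rw [← lintegral_map hκD hΘ, hκ.lintegral_eq D hD]
    exact measure_ne_top _ _
  refine (ae_eq_condExp_of_forall_setIntegral_eq hΘ.comap_le
    ((integrable_const _).indicator hD) (fun _ _ _ => hint.integrableOn) ?_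
    hmeas.stronglyMeasurable.aestronglyMeasurable).symm
  rintro _ ⟨B, hB, rfl⟩ -
  have hκDΘ : AEMeasurable (fun ω => κ (Θ ω) D) (P.restrict (Θ ⁻¹' B)) :=
    (hκD.comp hΘ).aemeasurable
  calc ∫ ω in Θ ⁻¹' B, (κ (Θ ω)).real D ∂P
      = (∫⁻ ω in Θ ⁻¹' B, κ (Θ ω) D ∂P).toReal :=
        integral_toReal hκDΘ (ae_of_all _ fun _ => measure_lt_top _ _)
    _ = P.real (D ∩ Θ ⁻¹' B) := by
        rw [← setLIntegral_map hB hκD hΘ, hκ.setLIntegral_eq hΘ hD hB, measureReal_def]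
    _ = ∫ ω in Θ ⁻¹' B, D.indicator (fun _ => (1 : ℝ)) ω ∂P := by
        rw [integral_indicator_const _ hD, measureReal_restrict_apply hD, smul_eq_mul, mul_one]

lemma condExp_iInter_ae_eq_prod_iff [IsFiniteMeasure P] (hκ : IsConsistentDisintegration P Θ κ)
    (hΘ : Measurable Θ) {ι : Type*} [Fintype ι] {E : ι → Set Ω} (hE : ∀ j, MeasurableSet (E j)) :
    (P[(⋂ j, E j).indicator (fun _ => (1 : ℝ)) | MeasurableSpace.comap Θ mΨ]
        =ᵐ[P] fun ω => ∏ j, P[(E j).indicator (fun _ => (1 : ℝ)) | MeasurableSpace.comap Θ mΨ] ω) ↔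
      ∀ᵐ θ ∂P.map Θ, κ θ (⋂ j, E j) = ∏ j, κ θ (E j) := by
  have hprod : (fun ω => ∏ j, P[(E j).indicator (fun _ => (1 : ℝ)) | MeasurableSpace.comap Θ mΨ] ω)
      =ᵐ[P] fun ω => ∏ j, (κ (Θ ω)).real (E j) := by
    filter_upwards [ae_all_iff.2 fun j => hκ.condExp_indicator_ae_eq hΘ (hE j)] with ω hω
    simp only [hω]
  rw [(hκ.condExp_indicator_ae_eq hΘ (MeasurableSet.iInter hE)).congr_left, hprod.congr_right,
    ae_map_iff hΘ.aemeasurable (measurableSet_eq_fun (κ.measurable_coe (.iInter hE))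
      (Finset.measurable_prod _ fun j _ => κ.measurable_coe (hE j)))]
  refine Filter.eventually_congr (ae_of_all _ fun ω => ?_)
  simp only [measureReal_def, ← ENNReal.toReal_prod]
  exact ENNReal.toReal_eq_toReal_iff' (measure_ne_top _ _)
    (ENNReal.prod_ne_top fun j _ => measure_ne_top _ _)

end IsConsistentDisintegration

end Disintegration

/-- For `I` countable and `T` countably generated, `{X_i}` is
`P`-conditionally independent given `Θ` iff it is `P_θ`-independent for
`P_Θ`-almost all `θ`. -/
theorem condIndep_iff_ae_indep
    {Ω Y Ψ I : Type*} [MeasurableSpace Ω] [mY : MeasurableSpace Y] [mΨ : MeasurableSpace Ψ]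
    [MeasurableSpace.CountablyGenerated Y] [Countable I]
    (P : Measure Ω) [IsProbabilityMeasure P]
    (Θ : Ω → Ψ) (hΘ : Measurable Θ)
    (Pd : Ψ → Measure Ω) (hPdprob : ∀ θ, IsProbabilityMeasure (Pd θ))
    (hPdmeas : ∀ D : Set Ω, MeasurableSet D → Measurable fun θ => Pd θ D)
    (hPdint : ∀ D : Set Ω, MeasurableSet D → ∫⁻ θ, Pd θ D ∂(P.map Θ) = P D)
    (hPdcons : ∀ D : Set Ψ, MeasurableSet D →
      ∀ᵐ θ ∂(P.map Θ).restrict D, Pd θ (Θ ⁻¹' D) = 1)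
    (X : I → Ω → Y) (hX : ∀ i, Measurable (X i)) :
    CondIndepFam mY P (MeasurableSpace.comap Θ mΨ) X ↔
      ∀ᵐ θ ∂(P.map Θ), ProbabilityTheory.iIndepFun X (Pd θ) := by
  let κ : Kernel Ψ Ω := ⟨Pd, Measure.measurable_of_measurable_coe _ hPdmeas⟩
  have : IsMarkovKernel κ := ⟨hPdprob⟩
  have hκ : IsConsistentDisintegration P Θ κ := ⟨hPdint, hPdcons⟩
  calc CondIndepFam mY P (MeasurableSpace.comap Θ mΨ) X
      ↔ ∀ (n : ℕ) (idx : Fin n → I), Function.Injective idx → ∀ E : Fin n → Set Ω,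
          (∀ j, MeasurableSet[MeasurableSpace.comap (X (idx j)) mY] (E j)) →
            ∀ᵐ θ ∂P.map Θ, κ θ (⋂ j, E j) = ∏ j, κ θ (E j) :=
        forall₄_congr fun _ _ _ _ => forall_congr' fun hE =>
          hκ.condExp_iInter_ae_eq_prod_iff hΘ fun j => (hX _).comap_le _ (hE j)
    _ ↔ Kernel.iIndepFun X κ (P.map Θ) :=
        (Kernel.iIndep_iff_forall_injective_fin (m := fun i => MeasurableSpace.comap (X i) mY)).symm
    _ ↔ _ := Kernel.iIndepFun_iff_ae_iIndepFun hX
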